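/- Let ψ be a species tree topology on X with |X| = n ≥ 2 and let T be a gene tree on X that is a caterpillar. Then the map Φ_{ψ,T} is injective on H_{ψ,T}; consequently |H_{ψ,T}| = |Φ_{ψ,T}(H_{ψ,T})|, i.e., the number of coalescent histories for T equals the number of population histories compatible with T. -/

import Mathlib

/-!
Rooted binary trees with leaves labeled by elements of a finite label set.
Each node of a tree is identified with the subtree rooted at it; since leaf
labels are required to be distinct, this identification is faithful.
-/

inductive RBT (α : Type) where
  | leaf (x : α)
  | node (l r : RBT α)
deriving DecidableEq

namespace RBT

variable {α : Type} [DecidableEq α]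

/-- The list of leaf labels, left to right. -/
def leafList : RBT α → List α
  | leaf x => [x]
  | node l r => l.leafList ++ r.leafList

/-- The clade of a node: the set of labels of leaves descended from or equal to it. -/
def clade (t : RBT α) : Finset α := t.leafList.toFinset

/-- `t` is a rooted binary tree on the label set `X`: its leaf labels are
distinct and form exactly the set `X`. -/
def IsTreeOn (t : RBT α) (X : Finset α) : Prop :=
  t.leafList.Nodup ∧ t.clade = X

/-- All nodes of a tree, each identified with the subtree rooted at it. -/
def subtrees : RBT α → Finset (RBT α)
  | leaf x => {leaf x}
  | node l r => insert (node l r) (subtrees l ∪ subtrees r)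

/-- `Anc i j` means node `i` is ancestral to or equal to node `j`, i.e. `i ⪰ j`. -/
def Anc (i j : RBT α) : Prop := j ∈ i.subtrees

instance (i j : RBT α) : Decidable (Anc i j) :=
  inferInstanceAs (Decidable (j ∈ i.subtrees))

/-- Whether a node is internal (a non-leaf). -/
def isInternal : RBT α → Bool
  | leaf _ => false
  | node _ _ => true

/-- The internal nodes of a tree. -/
def internals (t : RBT α) : Finset (RBT α) :=
  t.subtrees.filter fun s => s.isInternal = true

/-- A coalescent history for a gene tree `T` relative to a species tree
topology `ψ`: a map `h : I_T → I_ψ` such that the clade of `j` is contained in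
the clade of `h j` for every internal node `j` of `T`, and `h i ⪰ h j` in `ψ`
whenever `i ⪰ j` in `T`. -/
def IsCoalHistory (ψ T : RBT α) (h : ↥T.internals → ↥ψ.internals) : Prop :=
  (∀ j : ↥T.internals, (j : RBT α).clade ⊆ ((h j : RBT α)).clade) ∧
  ∀ i j : ↥T.internals, Anc (i : RBT α) (j : RBT α) →
    Anc (h i : RBT α) ((h j : RBT α))

/-- The set `H_{ψ,T}` of coalescent histories for `T` relative to `ψ`. -/
def coalHistories (ψ T : RBT α) : Set (↥T.internals → ↥ψ.internals) :=
  {h | IsCoalHistory ψ T h}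

/-- The map `Φ_{ψ,T}`: from a coalescent history, record only the number of
coalescent events `|h⁻¹(i)|` occurring at each internal node `i` of `ψ`. -/
def Phi (ψ T : RBT α) (h : ↥T.internals → ↥ψ.internals) : ↥ψ.internals → ℕ :=
  fun i => (Finset.univ.filter fun j : ↥T.internals => h j = i).card

/-- A population history for `ψ`, where `n` is the number of taxa: a map
`y : I_ψ → ℕ` with total sum `n - 1` such that, for every internal node `i`,
the sum of `y` over internal nodes `j` with `i ⪰ j` is at most `ℓ_i - 1`. -/
def IsPopHistory (ψ : RBT α) (n : ℕ) (y : ↥ψ.internals → ℕ) : Prop :=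
  (∑ i : ↥ψ.internals, y i = n - 1) ∧
  ∀ i : ↥ψ.internals,
    (∑ j ∈ Finset.univ.filter
        (fun j : ↥ψ.internals => Anc (i : RBT α) (j : RBT α)), y j)
      ≤ (i : RBT α).clade.card - 1

/-- The set `Y_ψ` of population histories for `ψ` on `n` taxa. -/
def popHistories (ψ : RBT α) (n : ℕ) : Set (↥ψ.internals → ℕ) :=
  {y | IsPopHistory ψ n y}

/-- A caterpillar: a rooted binary tree whose internal nodes are totally
ordered by the ancestry relation. -/
def IsCaterpillar (T : RBT α) : Prop :=
  ∀ i ∈ T.internals, ∀ j ∈ T.internals, Anc i j ∨ Anc j i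

/-- The set of clades of a tree. -/
def cladeSet (t : RBT α) : Set (Finset α) :=
  {s | ∃ v ∈ t.subtrees, v.clade = s}

end RBT

namespace RBT

variable {α : Type} [DecidableEq α]

lemma anc_refl (t : RBT α) : Anc t t := by
  cases t <;> simp [Anc, subtrees]

lemma anc_trans : ∀ {i j k : RBT α}, Anc i j → Anc j k → Anc i k := by
  intro i
  induction i with
  | leaf x =>
    intro j k hij hjk
    simp [Anc, subtrees] at hij
    subst hij; exact hjk
  | node l r ihl ihr =>
    intro j k hij hjk
    simp only [Anc, subtrees, Finset.mem_insert, Finset.mem_union] at hij ⊢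
    rcases hij with h | h | h
    · subst h
      simp only [Anc, subtrees, Finset.mem_insert, Finset.mem_union] at hjk
      exact hjk
    · right; left; exact ihl h hjk
    · right; right; exact ihr h hjk

/-- Number of nodes. -/
def sz : RBT α → ℕ
  | leaf _ => 1
  | node l r => sz l + sz r + 1

lemma sz_le_of_anc : ∀ {i j : RBT α}, Anc i j → sz j ≤ sz i := by
  intro i
  induction i with
  | leaf x =>
    intro j hij
    simp [Anc, subtrees] at hij
    subst hij; exact le_refl _
  | node l r ihl ihr =>
    intro j hij
    simp only [Anc, subtrees, Finset.mem_insert, Finset.mem_union] at hij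
    rcases hij with h | h | h
    · subst h; exact le_refl _
    · have := ihl h; simp [sz]; omega
    · have := ihr h; simp [sz]; omega

lemma anc_antisymm : ∀ {i j : RBT α}, Anc i j → Anc j i → i = j := by
  intro i j hij hji
  cases i with
  | leaf x =>
    simp [Anc, subtrees] at hij
    exact hij.symm
  | node l r =>
    simp only [Anc, subtrees, Finset.mem_insert, Finset.mem_union] at hij
    rcases hij with h | h | h
    · exact h.symm
    · have h1 := sz_le_of_anc (show Anc l j from h)
      have h2 := sz_le_of_anc hji
      simp [sz] at h2; omega
    · have h1 := sz_le_of_anc (show Anc r j from h)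
      have h2 := sz_le_of_anc hji
      simp [sz] at h2; omega

/-- Key lemma: if the number of nodes of `T` whose image under `h` is below
`i` is at least the number of nodes below `j`, then `i` is above `h j`. -/
lemma key_anc (ψ T : RBT α) (hcat : T.IsCaterpillar)
    (h : ↥T.internals → ↥ψ.internals) (hh : IsCoalHistory ψ T h)
    (j : ↥T.internals) (i : ↥ψ.internals)
    (hcard : (Finset.univ.filter fun k : ↥T.internals =>
        Anc (j : RBT α) (k : RBT α)).card
      ≤ (Finset.univ.filter fun k : ↥T.internals =>
        Anc (i : RBT α) ((h k : RBT α))).card) :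
    Anc (i : RBT α) ((h j : RBT α)) := by
  by_cases hmem : ∃ k : ↥T.internals,
      Anc (i : RBT α) ((h k : RBT α)) ∧ Anc (k : RBT α) (j : RBT α)
  · obtain ⟨k, hk1, hk2⟩ := hmem
    exact anc_trans hk1 (hh.2 k j hk2)
  · push_neg at hmem
    have hsub : (Finset.univ.filter fun k : ↥T.internals =>
          Anc (i : RBT α) ((h k : RBT α)))
        ⊆ (Finset.univ.filter fun k : ↥T.internals =>
          Anc (j : RBT α) (k : RBT α)) := by
      intro k hk
      simp only [Finset.mem_filter, Finset.mem_univ, true_and] at hk ⊢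
      rcases hcat (j : RBT α) j.2 (k : RBT α) k.2 with hc | hc
      · exact hc
      · exact absurd hc (hmem k hk)
    have heq := Finset.eq_of_subset_of_card_le hsub hcard
    have hj : j ∈ (Finset.univ.filter fun k : ↥T.internals =>
        Anc (i : RBT α) ((h k : RBT α))) := by
      rw [heq]
      simp only [Finset.mem_filter, Finset.mem_univ, true_and]
      exact anc_refl _
    simp only [Finset.mem_filter, Finset.mem_univ, true_and] at hj
    exact hj

/-- The count of nodes mapped below `i` is determined by `Phi`. -/
lemma count_below_eq (ψ T : RBT α)
    (h h' : ↥T.internals → ↥ψ.internals)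
    (hPhi : Phi ψ T h = Phi ψ T h') (i : ↥ψ.internals) :
    (Finset.univ.filter fun k : ↥T.internals =>
        Anc (i : RBT α) ((h k : RBT α))).card
    = (Finset.univ.filter fun k : ↥T.internals =>
        Anc (i : RBT α) ((h' k : RBT α))).card := by
  have e1 : ∀ g : ↥T.internals → ↥ψ.internals,
      (Finset.univ.filter fun k : ↥T.internals =>
        Anc (i : RBT α) ((g k : RBT α))).card
      = ∑ i' ∈ Finset.univ.filter
          (fun i' : ↥ψ.internals => Anc (i : RBT α) (i' : RBT α)),
          Phi ψ T g i' := by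
    intro g
    rw [Finset.card_eq_sum_card_fiberwise
      (f := g)
      (t := Finset.univ.filter fun i' : ↥ψ.internals =>
        Anc (i : RBT α) (i' : RBT α))
      (fun k hk => by
        simp only [Finset.mem_coe, Finset.mem_filter, Finset.mem_univ, true_and] at hk ⊢
        exact hk)]
    apply Finset.sum_congr rfl
    intro i' hi'
    simp only [Finset.mem_filter, Finset.mem_univ, true_and] at hi'
    unfold Phi
    congr 1
    ext k
    simp only [Finset.mem_filter, Finset.mem_univ, true_and]
    constructor
    · rintro ⟨_, h2⟩; exact h2
    · intro h2; exact ⟨by rw [h2]; exact hi', h2⟩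
  rw [e1 h, e1 h', hPhi]

lemma anc_of_phi_eq (ψ T : RBT α) (hcat : T.IsCaterpillar)
    (h h' : ↥T.internals → ↥ψ.internals)
    (hh : IsCoalHistory ψ T h) (hh' : IsCoalHistory ψ T h')
    (hPhi : Phi ψ T h = Phi ψ T h') (j : ↥T.internals) :
    Anc ((h' j : RBT α)) ((h j : RBT α)) := by
  apply key_anc ψ T hcat h hh j (h' j)
  calc (Finset.univ.filter fun k : ↥T.internals =>
        Anc (j : RBT α) (k : RBT α)).card
      ≤ (Finset.univ.filter fun k : ↥T.internals =>
        Anc ((h' j : RBT α)) ((h' k : RBT α))).card := by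
        apply Finset.card_le_card
        intro k hk
        simp only [Finset.mem_filter, Finset.mem_univ, true_and] at hk ⊢
        exact hh'.2 j k hk
    _ = (Finset.univ.filter fun k : ↥T.internals =>
        Anc ((h' j : RBT α)) ((h k : RBT α))).card :=
        (count_below_eq ψ T h h' hPhi (h' j)).symm

end RBT

/-- If the gene tree `T` is a caterpillar, then `Φ_{ψ,T}` is
injective on `H_{ψ,T}`; consequently the number of coalescent histories for
`T` equals the number of population histories compatible with `T`. -/
theorem caterpillar_Phi_injective
    {α : Type} [DecidableEq α] (X : Finset α) (n : ℕ)
    (hn : X.card = n) (h2 : 2 ≤ n)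
    (ψ T : RBT α) (hψ : ψ.IsTreeOn X) (hT : T.IsTreeOn X)
    (hcat : T.IsCaterpillar) :
    Set.InjOn (RBT.Phi ψ T) (RBT.coalHistories ψ T) ∧
    (RBT.coalHistories ψ T).ncard =
      (RBT.Phi ψ T '' RBT.coalHistories ψ T).ncard := by
  have inj : Set.InjOn (RBT.Phi ψ T) (RBT.coalHistories ψ T) := by
    intro h hh h' hh' hPhi
    funext j
    exact Subtype.ext (RBT.anc_antisymm
      (RBT.anc_of_phi_eq ψ T hcat h' h hh' hh hPhi.symm j)
      (RBT.anc_of_phi_eq ψ T hcat h h' hh hh' hPhi j))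
  exact ⟨inj, (Set.ncard_image_of_injOn inj).symm⟩
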